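/- arXiv:2104.12577 — 4 statements merged into one kernel-verified Lean document; each statement's English description precedes it below -/
import Mathlib

section
/- Let f_1, …, f_m : ℝ^n → ℝ be affine functions. The number of distinct sign vectors s : {1,…,m} → {-1, 0, +1} that are realized by some point x ∈ ℝ^n (i.e., s(j) = sign(f_j(x)) for all j) is at most 2^n · (m+1)^n. -/
/-!
Induct on the number of functions, over all finite-dimensional spaces at once. Appending an
affine function `g` to a family refines each realized sign vector into at most three, and into
more than one only if the old vector is also realized on the hyperplane `g = 0`: a cell of the old
family is convex, so the segment between two of its points where `g` has different signs meets
`g = 0` inside the cell. Unless `g` is constant (then nothing is refined) that hyperplane is an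
affine space of one dimension less, so the maximal count `N(n, m)` obeys
`N(n, m + 1) ≤ N(n, m) + 2 N(n - 1, m)`, a recursion that `2 ^ n * (m + 1) ^ n` satisfies.
-/

open Set Module

lemma convex_setOf_sign_eq (s : SignType) : Convex ℝ {u : ℝ | SignType.sign u = s} := by
  cases s
  · simp only [SignType.zero_eq_zero, sign_eq_zero_iff, ofPred_eq_eq_singleton]
    exact convex_singleton 0
  · simp only [SignType.neg_eq_neg_one, sign_eq_neg_one_iff]
    exact convex_Iio 0
  · simp only [SignType.pos_eq_one, sign_eq_one_iff]
    exact convex_Ioi 0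

lemma zero_mem_uIcc_of_sign_ne {u v : ℝ} (h : SignType.sign u ≠ SignType.sign v) :
    (0 : ℝ) ∈ uIcc u v := by
  rw [mem_uIcc]
  rcases lt_trichotomy u 0 with hu | rfl | hu <;> rcases lt_trichotomy v 0 with hv | rfl | hv
  all_goals first
    | exact absurd ((sign_neg hu).trans (sign_neg hv).symm) h
    | exact absurd ((sign_pos hu).trans (sign_pos hv).symm) h
    | (left; constructor <;> linarith)
    | (right; constructor <;> linarith)

lemma ncard_le_ncard_add_mul_of_restrict {α : Type*} [Finite α] {m : ℕ}
    {S : Set (Fin (m + 1) → α)} {T Z : Set (Fin m → α)}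
    (hST : MapsTo (· ∘ Fin.castSucc) S T) (hZT : Z ⊆ T)
    (hZ : ∀ s ∈ S, ∀ t ∈ S, s ≠ t → s ∘ Fin.castSucc = t ∘ Fin.castSucc →
      s ∘ Fin.castSucc ∈ Z) :
    S.ncard ≤ T.ncard + (Nat.card α - 1) * Z.ncard := by
  set π : (Fin (m + 1) → α) → (Fin m → α) := (· ∘ Fin.castSucc)
  have hout : (S \ π ⁻¹' Z).ncard ≤ (T \ Z).ncard := by
    refine ncard_le_ncard_of_injOn π (fun s hs => ⟨hST hs.1, hs.2⟩) ?_
    intro s hs t ht hst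
    by_contra hne
    exact hs.2 (hZ s hs.1 t ht.1 hne hst)
  have hin : (S ∩ π ⁻¹' Z).ncard ≤ (Z ×ˢ (univ : Set α)).ncard := by
    refine ncard_le_ncard_of_injOn (fun s => (π s, s (Fin.last m)))
      (fun s hs => ⟨hs.2, mem_univ _⟩) ?_
    intro s _ t _ hst
    exact funext (Fin.lastCases (congrArg Prod.snd hst) (congrFun (congrArg Prod.fst hst)))
  rw [ncard_prod, ncard_univ] at hin
  have hsplit := ncard_inter_add_ncard_sdiff_eq_ncard S (π ⁻¹' Z)
  have hT := ncard_sdiff_add_ncard_of_subset hZT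
  rw [Nat.sub_one_mul, mul_comm]
  omega

lemma two_pow_mul_pow_add_le (k m : ℕ) :
    2 ^ (k + 1) * (m + 1) ^ (k + 1) + 2 * (2 ^ k * (m + 1) ^ k) ≤ 2 ^ (k + 1) * (m + 2) ^ (k + 1) :=
  calc _ = 2 ^ (k + 1) * ((m + 1) ^ k * (m + 2)) := by ring
    _ ≤ 2 ^ (k + 1) * ((m + 2) ^ k * (m + 2)) := by gcongr; omega
    _ = _ := by ring

section

variable {E : Type*} [AddCommGroup E] [Module ℝ E]

def signVectors {ι : Type*} (f : ι → E →ᵃ[ℝ] ℝ) (C : Set E) : Set (ι → SignType) :=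
  (fun x j => SignType.sign (f j x)) '' C

lemma signVectors_comp {ι κ : Type*} (f : ι → E →ᵃ[ℝ] ℝ) (e : κ → ι) (C : Set E) :
    signVectors (f ∘ e) C = (· ∘ e) '' signVectors f C := by
  rw [signVectors, signVectors, image_image]
  rfl

lemma signVectors_range {ι F : Type*} [AddCommGroup F] [Module ℝ F] (f : ι → E →ᵃ[ℝ] ℝ)
    (φ : F →ᵃ[ℝ] E) : signVectors f (range φ) = signVectors (fun j => (f j).comp φ) univ := by
  rw [signVectors, signVectors, image_univ, ← range_comp]
  rfl

lemma convex_setOf_forall_sign_eq {ι : Type*} (f : ι → E →ᵃ[ℝ] ℝ) (s : ι → SignType) :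
    Convex ℝ {x | ∀ j, SignType.sign (f j x) = s j} := by
  rw [ofPred_forall]
  exact convex_iInter fun j => (convex_setOf_sign_eq (s j)).affine_preimage (f j)

lemma exists_range_eq_setOf_eq_zero (g : E →ᵃ[ℝ] ℝ) (hg : g.linear ≠ 0) :
    ∃ φ : LinearMap.ker g.linear →ᵃ[ℝ] E, range φ = {x | g x = 0} := by
  have hdecomp : ∀ x, g x = g.linear x + g 0 := fun x => by simpa using g.map_vadd 0 x
  obtain ⟨v, hv⟩ := LinearMap.range_eq_top.1 (Dual.range_eq_top_of_ne_zero hg) (-g 0)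
  refine ⟨(LinearMap.ker g.linear).subtype.toAffineMap + AffineMap.const ℝ _ v, ?_⟩
  ext x
  simp only [AffineMap.coe_add, LinearMap.coe_toAffineMap, Submodule.coe_subtype,
    AffineMap.coe_const, mem_range, Pi.add_apply, Function.const_apply, Subtype.exists,
    LinearMap.mem_ker, exists_prop, mem_ofPred_eq]
  constructor
  · rintro ⟨w, hw, rfl⟩
    rw [hdecomp, map_add, hw, hv]
    ring
  · intro hx
    refine ⟨x - v, ?_, sub_add_cancel x v⟩
    rw [map_sub, hv, ← hx, hdecomp x]
    ring

section

variable {m : ℕ} (f : Fin (m + 1) → E →ᵃ[ℝ] ℝ)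

lemma comp_castSucc_mem_signVectors_inter_of_ne {C : Set E} (hC : Convex ℝ C)
    {s t : Fin (m + 1) → SignType} (hs : s ∈ signVectors f C) (ht : t ∈ signVectors f C)
    (hst : s ≠ t) (hres : s ∘ Fin.castSucc = t ∘ Fin.castSucc) :
    s ∘ Fin.castSucc ∈ signVectors (f ∘ Fin.castSucc) (C ∩ {x | f (Fin.last m) x = 0}) := by
  obtain ⟨x, hxC, rfl⟩ := hs
  obtain ⟨y, hyC, rfl⟩ := ht
  have hlast : SignType.sign (f (Fin.last m) x) ≠ SignType.sign (f (Fin.last m) y) :=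
    fun h => hst (funext (Fin.lastCases h (congrFun hres)))
  obtain ⟨z, hz, hz0⟩ : ∃ z ∈ segment ℝ x y, f (Fin.last m) z = 0 := by
    rw [← mem_image, image_segment, segment_eq_uIcc]
    exact zero_mem_uIcc_of_sign_ne hlast
  have hcell : segment ℝ x y ⊆
      {w | ∀ j, SignType.sign (f (Fin.castSucc j) w) = SignType.sign (f (Fin.castSucc j) x)} :=
    (convex_setOf_forall_sign_eq _ _).segment_subset (fun _ => rfl)
      (fun j => (congrFun hres j).symm)
  exact ⟨z, ⟨hC.segment_subset hxC hyC hz, hz0⟩, funext (hcell hz)⟩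

lemma ncard_signVectors_le_add {C : Set E} (hC : Convex ℝ C) :
    (signVectors f C).ncard ≤ (signVectors (f ∘ Fin.castSucc) C).ncard +
      2 * (signVectors (f ∘ Fin.castSucc) (C ∩ {x | f (Fin.last m) x = 0})).ncard := by
  have hcard : Nat.card SignType - 1 = 2 := by rw [Nat.card_eq_fintype_card]; rfl
  have key := ncard_le_ncard_add_mul_of_restrict (S := signVectors f C)
    (T := signVectors (f ∘ Fin.castSucc) C)
    (by rw [signVectors_comp]; exact mapsTo_image _ _)
    (image_mono inter_subset_left)
    (fun s hs t ht hst hres => comp_castSucc_mem_signVectors_inter_of_ne f hC hs ht hst hres)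
  rwa [hcard] at key

lemma ncard_signVectors_le_of_linear_eq_zero (h : (f (Fin.last m)).linear = 0) (C : Set E) :
    (signVectors f C).ncard ≤ (signVectors (f ∘ Fin.castSucc) C).ncard := by
  obtain ⟨c, hc⟩ := (AffineMap.linear_eq_zero_iff_exists_const _).1 h
  rw [signVectors_comp]
  refine ncard_le_ncard_of_injOn _ (mapsTo_image _ _) ?_
  rintro _ ⟨x, -, rfl⟩ _ ⟨y, -, rfl⟩ hxy
  exact funext (Fin.lastCases (by simp [hc]) (congrFun hxy))

end

theorem ncard_signVectors_univ_le [FiniteDimensional ℝ E] {m : ℕ} (f : Fin m → E →ᵃ[ℝ] ℝ) :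
    (signVectors f univ).ncard ≤ 2 ^ finrank ℝ E * (m + 1) ^ finrank ℝ E := by
  induction m generalizing E with
  | zero =>
    calc _ ≤ 1 := ncard_le_one_of_subsingleton _
      _ ≤ _ := by simp [Nat.one_le_two_pow]
  | succ m ih =>
    by_cases hg : (f (Fin.last m)).linear = 0
    · calc _ ≤ (signVectors (f ∘ Fin.castSucc) univ).ncard :=
            ncard_signVectors_le_of_linear_eq_zero f hg univ
        _ ≤ 2 ^ finrank ℝ E * (m + 1) ^ finrank ℝ E := ih _
        _ ≤ 2 ^ finrank ℝ E * (m + 1 + 1) ^ finrank ℝ E := by gcongr; omega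
    · obtain ⟨φ, hφ⟩ := exists_range_eq_setOf_eq_zero _ hg
      have hk := Dual.finrank_ker_add_one_of_ne_zero hg
      set k := finrank ℝ (LinearMap.ker (f (Fin.last m)).linear)
      calc _ ≤ (signVectors (f ∘ Fin.castSucc) univ).ncard +
            2 * (signVectors (f ∘ Fin.castSucc) (univ ∩ {x | f (Fin.last m) x = 0})).ncard :=
            ncard_signVectors_le_add f convex_univ
        _ ≤ 2 ^ (k + 1) * (m + 1) ^ (k + 1) + 2 * (2 ^ k * (m + 1) ^ k) := by
            rw [univ_inter, ← hφ, signVectors_range, hk]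
            gcongr
            exacts [ih _, ih _]
        _ ≤ 2 ^ finrank ℝ E * (m + 1 + 1) ^ finrank ℝ E := by
            rw [← hk]; exact two_pow_mul_pow_add_le k m

end

/-- The number of sign vectors realized by `m` affine functions on `ℝ^n`
is at most `2^n * (m+1)^n`. -/
theorem sign_vectors_card_le (n m : ℕ) (a : Fin m → Fin n → ℝ) (b : Fin m → ℝ) :
    Set.ncard {s : Fin m → SignType |
        ∃ x : Fin n → ℝ, ∀ j, s j = SignType.sign ((∑ i, a j i * x i) + b j)} ≤
      2 ^ n * (m + 1) ^ n := by
  let f : Fin m → (Fin n → ℝ) →ᵃ[ℝ] ℝ := fun j =>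
    (dotProductBilin ℝ ℝ (a j)).toAffineMap + AffineMap.const ℝ _ (b j)
  convert ncard_signVectors_univ_le f using 1
  · congr 1
    ext s
    simp [signVectors, f, funext_iff, eq_comm, dotProduct]
  · simp
end

section
/- Fix positive integers n, N, M. Define an equivalence relation on [0,M)^n by v ≈ v' iff for every coordinate i, ⌊N·v_i⌋ = ⌊N·v'_i⌋; for every i, fract(N·v_i) = 0 ↔ fract(N·v'_i) = 0; and for all coordinates i, j, fract(N·v_i) ≤ fract(N·v_j) ↔ fract(N·v'_i) ≤ fract(N·v'_j). Then the number of equivalence classes is at most n! · (2MN)^n. -/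
/-!
A region is determined by its code: the integer parts `⌊N vᵢ⌋`, which lie in `[0, MN)`, the
permutation sorting the fractional parts, and the set of positions at which the sorted fractional
parts rise strictly above all earlier values and above `0`. From the permutation and this jump set
one reads off both the order of the fractional parts and which of them vanish, so there are at most
`(MN)ⁿ · n! · 2ⁿ` regions.
-/

theorem Set.ncard_setOf_exists_eq_le_of_factorsThrough {α β γ : Type*} {p : α → Prop}
    {f : α → β} {g : α → γ} (hgf : g.FactorsThrough f) (hf : (f '' {x | p x}).Finite) :
    {c | ∃ x, p x ∧ c = g x}.ncard ≤ (f '' {x | p x}).ncard := by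
  rcases isEmpty_or_nonempty γ with _ | ⟨⟨c⟩⟩
  · simp [Set.eq_empty_of_isEmpty]
  have himage :
      {c | ∃ x, p x ∧ c = g x} = Function.extend f g (fun _ => c) '' (f '' {x | p x}) := by
    ext; simp [Set.image_image, hgf.extend_apply, eq_comm]
  rw [himage]
  exact Set.ncard_image_le hf

section Records

variable {ι α : Type*} [LinearOrder ι] [LinearOrder α]

def IsRecordAbove (b : α) (s : ι → α) (k : ι) : Prop :=
  b < s k ∧ ∀ j < k, s j < s k

theorem IsRecordAbove.lt_iff {b : α} {s : ι → α} (hs : Monotone s) {k : ι}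
    (hk : IsRecordAbove b s k) (c : ι) : s c < s k ↔ c < k :=
  ⟨fun h => lt_of_not_ge fun hkc => (hs hkc).not_gt h, hk.2 c⟩

theorem Monotone.le_iff_forall_isRecordAbove [WellFoundedLT ι] {b x : α} {s : ι → α}
    (hs : Monotone s) (hbx : b ≤ x) (a : ι) :
    s a ≤ x ↔ ∀ k ≤ a, IsRecordAbove b s k → s k ≤ x := by
  refine ⟨fun ha k hka _ => (hs hka).trans ha, fun h => ?_⟩
  by_contra! hxa
  obtain ⟨k, hxk, hmin⟩ := wellFounded_lt.has_min {k | x < s k} ⟨a, hxa⟩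
  have hka : k ≤ a := not_lt.1 (hmin a hxa)
  have hrec : IsRecordAbove b s k :=
    ⟨hbx.trans_lt hxk, fun j hjk => (not_lt.1 fun hxj => hmin j hxj hjk).trans_lt hxk⟩
  exact (h k hka hrec).not_gt hxk

end Records

section SortedJumps

variable {n : ℕ} {α : Type*} [LinearOrder α] [Zero α]

def sortJumps (g : Fin n → α) : Set (Fin n) := {k | IsRecordAbove 0 (g ∘ Tuple.sort g) k}

def orderCode (g : Fin n → α) : Equiv.Perm (Fin n) × Set (Fin n) := (Tuple.sort g, sortJumps g)

theorem le_iff_forall_mem_sortJumps {g : Fin n → α} (hg : ∀ i, 0 ≤ g i) (i j : Fin n) :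
    g i ≤ g j ↔ ∀ k ≤ (Tuple.sort g)⁻¹ i, k ∈ sortJumps g → k ≤ (Tuple.sort g)⁻¹ j := by
  have hs := Tuple.monotone_sort g
  have hg_eq : ∀ i, g i = (g ∘ Tuple.sort g) ((Tuple.sort g)⁻¹ i) := by simp
  rw [hg_eq i, hs.le_iff_forall_isRecordAbove (hg j)]
  refine forall₂_congr fun k _ => imp_congr_right fun hk => ?_
  rw [hg_eq j, ← not_lt, hk.lt_iff hs, not_lt]

theorem eq_zero_iff_forall_notMem_sortJumps {g : Fin n → α} (hg : ∀ i, 0 ≤ g i) (i : Fin n) :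
    g i = 0 ↔ ∀ k ≤ (Tuple.sort g)⁻¹ i, k ∉ sortJumps g := by
  have hs := Tuple.monotone_sort g
  have hg_eq : g i = (g ∘ Tuple.sort g) ((Tuple.sort g)⁻¹ i) := by simp
  rw [← (hg i).ge_iff_eq', hg_eq, hs.le_iff_forall_isRecordAbove le_rfl]
  exact forall₂_congr fun k _ => ⟨fun h hk => (h hk).not_gt hk.1, fun h hk => absurd hk h⟩

theorem le_iff_le_of_orderCode_eq {g g' : Fin n → α} (hg : ∀ i, 0 ≤ g i) (hg' : ∀ i, 0 ≤ g' i)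
    (h : orderCode g = orderCode g') (i j : Fin n) : g i ≤ g j ↔ g' i ≤ g' j := by
  simp only [orderCode, Prod.mk.injEq] at h
  rw [le_iff_forall_mem_sortJumps hg, le_iff_forall_mem_sortJumps hg', h.1, h.2]

theorem eq_zero_iff_of_orderCode_eq {g g' : Fin n → α} (hg : ∀ i, 0 ≤ g i)
    (hg' : ∀ i, 0 ≤ g' i) (h : orderCode g = orderCode g') (i : Fin n) :
    g i = 0 ↔ g' i = 0 := by
  simp only [orderCode, Prod.mk.injEq] at h
  rw [eq_zero_iff_forall_notMem_sortJumps hg, eq_zero_iff_forall_notMem_sortJumps hg', h.1, h.2]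

end SortedJumps

noncomputable def regionCode {n : ℕ} (N : ℕ) (v : Fin n → ℝ) :
    (Fin n → ℤ) × Equiv.Perm (Fin n) × Set (Fin n) :=
  (fun i => ⌊(N : ℝ) * v i⌋, orderCode fun i => Int.fract ((N : ℝ) * v i))

theorem regionCode_mem {n N M : ℕ} (hN : 0 < N) {v : Fin n → ℝ}
    (hv : ∀ i, v i ∈ Set.Ico (0 : ℝ) M) :
    regionCode N v ∈ Fintype.piFinset (fun _ => Finset.Ico 0 ((M * N : ℕ) : ℤ)) ×ˢ
      (Finset.univ : Finset (Equiv.Perm (Fin n) × Set (Fin n))) := by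
  simp only [regionCode, Finset.mem_product, Fintype.mem_piFinset, Finset.mem_Ico,
    Finset.mem_univ, and_true]
  intro i
  obtain ⟨hv0, hvM⟩ := hv i
  refine ⟨Int.floor_nonneg.2 (by positivity), Int.floor_lt.2 ?_⟩
  push_cast
  nlinarith [(Nat.cast_pos.2 hN : (0 : ℝ) < N)]

theorem number_of_regions_le_general (n N M : ℕ) (hN : 0 < N) :
    Set.ncard {C : Set (Fin n → ℝ) |
        ∃ v : Fin n → ℝ, (∀ i, v i ∈ Set.Ico (0 : ℝ) M) ∧
          C = {v' : Fin n → ℝ | (∀ i, v' i ∈ Set.Ico (0 : ℝ) M) ∧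
            (∀ i, ⌊(N : ℝ) * v i⌋ = ⌊(N : ℝ) * v' i⌋) ∧
            (∀ i, Int.fract ((N : ℝ) * v i) = 0 ↔ Int.fract ((N : ℝ) * v' i) = 0) ∧
            (∀ i j, Int.fract ((N : ℝ) * v i) ≤ Int.fract ((N : ℝ) * v j) ↔
              Int.fract ((N : ℝ) * v' i) ≤ Int.fract ((N : ℝ) * v' j))}} ≤
      n.factorial * (2 * M * N) ^ n := by
  set codes := Fintype.piFinset (fun _ : Fin n => Finset.Ico 0 ((M * N : ℕ) : ℤ)) ×ˢ
    (Finset.univ : Finset (Equiv.Perm (Fin n) × Set (Fin n)))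
  have hcodes :
      regionCode N '' {v : Fin n → ℝ | ∀ i, v i ∈ Set.Ico (0 : ℝ) M} ⊆ (codes : Set _) :=
    Set.image_subset_iff.2 fun _ hv => Finset.mem_coe.2 (regionCode_mem hN hv)
  have hfract (v : Fin n → ℝ) i : 0 ≤ Int.fract ((N : ℝ) * v i) := Int.fract_nonneg _
  calc _ ≤ (regionCode N '' {v | ∀ i, v i ∈ Set.Ico (0 : ℝ) M}).ncard := by
        refine Set.ncard_setOf_exists_eq_le_of_factorsThrough (fun v w h => ?_)
          (codes.finite_toSet.subset hcodes)
        simp only [regionCode, Prod.mk.injEq] at h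
        obtain ⟨hfloor, horder⟩ := h
        have hfloor' : ∀ i, ⌊(N : ℝ) * v i⌋ = ⌊(N : ℝ) * w i⌋ := congrFun hfloor
        ext v'
        simp only [Set.mem_ofPred_eq, hfloor',
          eq_zero_iff_of_orderCode_eq (hfract v) (hfract w) horder,
          le_iff_le_of_orderCode_eq (hfract v) (hfract w) horder]
    _ ≤ codes.card := by simpa using Set.ncard_le_ncard hcodes
    _ = n.factorial * (2 * M * N) ^ n := by
        simp only [codes, Finset.card_product, Fintype.card_piFinset, Int.card_Ico, sub_zero,
          Int.toNat_natCast, Finset.prod_const, Finset.card_univ, Fintype.card_fin,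
          Fintype.card_prod, Fintype.card_perm, Fintype.card_set]
        ring

/-- The number of `1/N`-regions bounded by `M` over `n` clocks is at most
`n! * (2*M*N)^n`. -/
theorem number_of_regions_le (n N M : ℕ) (hn : 0 < n) (hN : 0 < N) (hM : 0 < M) :
    Set.ncard {C : Set (Fin n → ℝ) |
        ∃ v : Fin n → ℝ, (∀ i, v i ∈ Set.Ico (0 : ℝ) M) ∧
          C = {v' : Fin n → ℝ | (∀ i, v' i ∈ Set.Ico (0 : ℝ) M) ∧
            (∀ i, ⌊(N : ℝ) * v i⌋ = ⌊(N : ℝ) * v' i⌋) ∧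
            (∀ i, Int.fract ((N : ℝ) * v i) = 0 ↔ Int.fract ((N : ℝ) * v' i) = 0) ∧
            (∀ i j, Int.fract ((N : ℝ) * v i) ≤ Int.fract ((N : ℝ) * v j) ↔
              Int.fract ((N : ℝ) * v' i) ≤ Int.fract ((N : ℝ) * v' j))}} ≤
      n.factorial * (2 * M * N) ^ n :=
  number_of_regions_le_general n N M hN
end

section
/- Let r be a 1/N-region in [0,M)^n, i.e., an equivalence class of the relation identifying valuations with equal integer parts of N·v_i, equal zero-tests of the fractional parts of N·v_i, and equal ordering of the fractional parts of N·v_i. Then the topological closure of r contains at most n+1 points of the lattice (1/N)·ℤ^n. -/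
/-!
After rescaling by `N` and translating by the common integer part, the region sits in the simplex
`{0 ≤ g ≤ 1, g i ≤ g j whenever i precedes j in the order of the fractional parts}`, which is
closed and hence contains the closure of the region. Its integer points are `0/1`-vectors that
are monotone along a total preorder, so they form a chain for the pointwise order; a chain of
`0/1`-vectors is determined by the number of ones, which leaves at most `n + 1` of them.
-/

open Set

section OrderSimplex

variable {ι α : Type*} [LinearOrder α]

def orderSimplex (f : ι → α) : Set (ι → ℝ) :=
  {g | (∀ i, g i ∈ Icc 0 1) ∧ ∀ i j, f i ≤ f j → g i ≤ g j}

theorem isClosed_orderSimplex (f : ι → α) : IsClosed (orderSimplex f) := by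
  have hmono (i j : ι) : IsClosed {g : ι → ℝ | f i ≤ f j → g i ≤ g j} := by
    by_cases hij : f i ≤ f j
    · simpa only [hij, true_imp_iff] using isClosed_le (continuous_apply i) (continuous_apply j)
    · simp only [hij, false_imp_iff, ofPred_true, isClosed_univ]
  rw [orderSimplex, ofPred_and, ofPred_forall, ofPred_forall]
  exact (isClosed_iInter fun i => isClosed_Icc.preimage (continuous_apply i)).inter
    (isClosed_iInter fun i => by simpa only [ofPred_forall] using isClosed_iInter (hmono i))

theorem isChain_of_subset_orderSimplex {f : ι → α} {S : Set (ι → ℝ)}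
    (hS : S ⊆ orderSimplex f) (h01 : ∀ g ∈ S, ∀ i, g i = 0 ∨ g i = 1) :
    IsChain (· ≤ ·) S := by
  intro g hg g' hg' _
  by_contra! hcmp
  obtain ⟨i, hi⟩ := not_forall.mp hcmp.1
  obtain ⟨j, hj⟩ := not_forall.mp hcmp.2
  have hgi : g i = 1 ∧ g' i = 0 := by
    rcases h01 g hg i with h | h <;> rcases h01 g' hg' i with h' | h' <;> simp_all
  have hgj : g' j = 1 ∧ g j = 0 := by
    rcases h01 g hg j with h | h <;> rcases h01 g' hg' j with h' | h' <;> simp_all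
  rcases le_total (f i) (f j) with hle | hle
  · linarith [(hS hg).2 i j hle]
  · linarith [(hS hg').2 j i hle]

theorem ncard_le_card_add_one_of_isChain [Fintype ι] {S : Set (ι → ℝ)}
    (h01 : ∀ g ∈ S, ∀ i, g i = 0 ∨ g i = 1) (hS : IsChain (· ≤ ·) S) :
    S.ncard ≤ Fintype.card ι + 1 := by
  classical
  let ones (g : ι → ℝ) : Finset ι := {i | g i = 1}
  have ones_mono : ∀ g ∈ S, ∀ g' ∈ S, g ≤ g' → ones g ⊆ ones g' := by
    intro g _ g' hg' hle i hi
    simp only [ones, Finset.mem_filter, Finset.mem_univ, true_and] at hi ⊢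
    rcases h01 g' hg' i with h | h
    · linarith [hle i]
    · exact h
  have hinj : InjOn (fun g => (ones g).card) S := by
    intro g hg g' hg' hcard
    have hones : ones g = ones g' := by
      rcases hS.total hg hg' with hle | hle
      · exact Finset.eq_of_subset_of_card_le (ones_mono g hg g' hg' hle) hcard.ge
      · exact (Finset.eq_of_subset_of_card_le (ones_mono g' hg' g hg hle) hcard.le).symm
    funext i
    have hi := congrArg (i ∈ ·) hones
    simp only [ones, Finset.mem_filter, Finset.mem_univ, true_and, eq_iff_iff] at hi
    rcases h01 g hg i with h | h <;> rcases h01 g' hg' i with h' | h' <;> simp_all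
  calc S.ncard ≤ (Iic (Fintype.card ι)).ncard :=
        ncard_le_ncard_of_injOn _ (fun g _ => Finset.card_le_univ (ones g)) hinj (finite_Iic _)
    _ = Fintype.card ι + 1 := by
        rw [← Finset.coe_Iic, ncard_coe_finset, Nat.card_Iic]

theorem ncard_le_of_subset_orderSimplex_of_int [Fintype ι] {f : ι → α} {S : Set (ι → ℝ)}
    (hS : S ⊆ orderSimplex f) (hZ : ∀ g ∈ S, ∀ i, ∃ k : ℤ, g i = k) :
    S.ncard ≤ Fintype.card ι + 1 := by
  have h01 : ∀ g ∈ S, ∀ i, g i = 0 ∨ g i = 1 := by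
    intro g hg i
    obtain ⟨k, hk⟩ := hZ g hg i
    obtain ⟨h0, h1⟩ := (hS hg).1 i
    rw [hk] at h0 h1 ⊢
    have : k = 0 ∨ k = 1 := by
      have : (0 : ℤ) ≤ k := by exact_mod_cast h0
      have : k ≤ 1 := by exact_mod_cast h1
      omega
    rcases this with rfl | rfl <;> simp
  exact ncard_le_card_add_one_of_isChain h01 (isChain_of_subset_orderSimplex hS h01)

end OrderSimplex

section Cell

variable {ι : Type*} {c : ℝ}

noncomputable def cellChart (c : ℝ) (v₀ v : ι → ℝ) : ι → ℝ := fun i => c * v i - ⌊c * v₀ i⌋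

theorem continuous_cellChart (c : ℝ) (v₀ : ι → ℝ) : Continuous (cellChart c v₀) := by
  unfold cellChart
  fun_prop

theorem cellChart_injective (hc : c ≠ 0) (v₀ : ι → ℝ) : Function.Injective (cellChart c v₀) := by
  intro v w h
  funext i
  simpa [cellChart, hc] using congrFun h i

theorem cellChart_mem_orderSimplex {v₀ v : ι → ℝ} (hfloor : ∀ i, ⌊c * v i⌋ = ⌊c * v₀ i⌋)
    (hord : ∀ i j, Int.fract (c * v₀ i) ≤ Int.fract (c * v₀ j) →
      Int.fract (c * v i) ≤ Int.fract (c * v j)) :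
    cellChart c v₀ v ∈ orderSimplex fun i => Int.fract (c * v₀ i) := by
  have hfract : cellChart c v₀ v = fun i => Int.fract (c * v i) := by
    funext i
    rw [cellChart, ← hfloor i, Int.self_sub_floor]
  rw [hfract]
  exact ⟨fun i => ⟨Int.fract_nonneg _, (Int.fract_lt_one _).le⟩, hord⟩

theorem cellChart_apply_int (hc : c ≠ 0) (v₀ : ι → ℝ) {v : ι → ℝ}
    (hv : ∀ i, ∃ k : ℤ, v i = k / c) (i : ι) : ∃ k : ℤ, cellChart c v₀ v i = k := by
  obtain ⟨k, hk⟩ := hv i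
  refine ⟨k - ⌊c * v₀ i⌋, ?_⟩
  rw [cellChart, hk, mul_div_cancel₀ _ hc]
  push_cast
  ring

end Cell

theorem region_corners_card_le_general (n N M : ℕ) (hN : 0 < N) (v0 : Fin n → ℝ) :
    Set.ncard (closure {v : Fin n → ℝ | (∀ i, v i ∈ Set.Ico (0 : ℝ) M) ∧
        (∀ i, ⌊(N : ℝ) * v i⌋ = ⌊(N : ℝ) * v0 i⌋) ∧
        (∀ i, Int.fract ((N : ℝ) * v i) = 0 ↔ Int.fract ((N : ℝ) * v0 i) = 0) ∧
        (∀ i j, Int.fract ((N : ℝ) * v i) ≤ Int.fract ((N : ℝ) * v j) ↔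
          Int.fract ((N : ℝ) * v0 i) ≤ Int.fract ((N : ℝ) * v0 j))} ∩
      {v : Fin n → ℝ | ∀ i, ∃ k : ℤ, v i = (k : ℝ) / N}) ≤ n + 1 := by
  have hc : (N : ℝ) ≠ 0 := by positivity
  rw [← ncard_image_of_injective _ (cellChart_injective hc v0)]
  refine (ncard_le_of_subset_orderSimplex_of_int (f := fun i => Int.fract ((N : ℝ) * v0 i)) ?_ ?_)
    |>.trans_eq (by rw [Fintype.card_fin])
  · refine image_subset_iff.2 fun v hv => ?_
    refine closure_minimal (fun w hw => ?_) ((isClosed_orderSimplex _).preimage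
      (continuous_cellChart _ _)) hv.1
    exact cellChart_mem_orderSimplex hw.2.1 fun i j => (hw.2.2.2 i j).2
  · exact forall_mem_image.2 fun v hv => cellChart_apply_int hc v0 hv.2

/-- The closure of a `1/N`-region in `[0,M)^n` contains at most `n+1` points of the
lattice `(1/N)·ℤ^n` (its corners). -/
theorem region_corners_card_le (n N M : ℕ) (hn : 0 < n) (hN : 0 < N) (hM : 0 < M)
    (v0 : Fin n → ℝ) (hv0 : ∀ i, v0 i ∈ Set.Ico (0 : ℝ) M) :
    Set.ncard (closure {v : Fin n → ℝ | (∀ i, v i ∈ Set.Ico (0 : ℝ) M) ∧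
        (∀ i, ⌊(N : ℝ) * v i⌋ = ⌊(N : ℝ) * v0 i⌋) ∧
        (∀ i, Int.fract ((N : ℝ) * v i) = 0 ↔ Int.fract ((N : ℝ) * v0 i) = 0) ∧
        (∀ i j, Int.fract ((N : ℝ) * v i) ≤ Int.fract ((N : ℝ) * v j) ↔
          Int.fract ((N : ℝ) * v0 i) ≤ Int.fract ((N : ℝ) * v0 j))} ∩
      {v : Fin n → ℝ | ∀ i, ∃ k : ℤ, v i = (k : ℝ) / N}) ≤ n + 1 :=
  region_corners_card_le_general n N M hN v0
end

section
/- Let G be a finite strongly connected directed graph with integer edge weights. If G contains a cycle of strictly positive total weight and a cycle of strictly negative total weight, then G contains a cycle of total weight exactly 0. -/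
/-!
Fix vertices `a` on the positive cycle `c₁` and `b`
on the negative cycle `c₂`, and walks `p : a ⟶ b`, `q : b ⟶ a`. If the loop `p c₂ q` at `a` has
weight `≤ 0`, then going `-w(p c₂ q)` times around `c₁` and `w(c₁)` times around `p c₂ q` gives a
cycle of weight `0`. Otherwise `w(p) + w(q) > -w(c₂) > 0`, so the loop `q c₁ p` at `b` is positive
and the same recipe applies to it and `c₂`.
-/

/-- A path given as a list of edges: every pair is an edge and consecutive
edges match (target of one is source of the next). -/
def IsEdgePath {V : Type*} (E : V → V → Prop) (p : List (V × V)) : Prop :=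
  (∀ e ∈ p, E e.1 e.2) ∧ p.Chain' (fun e f => e.2 = f.1)

/-- A cycle: a nonempty edge path whose first source equals its last target. -/
def IsCycle {V : Type*} (E : V → V → Prop) (p : List (V × V)) : Prop :=
  IsEdgePath E p ∧ p ≠ [] ∧ p.head?.map Prod.fst = p.getLast?.map Prod.snd

/-- A simple cycle: no repeated vertex except that the endpoints coincide,
i.e. the sources of its edges are pairwise distinct. -/
def IsSimpleCycle {V : Type*} (E : V → V → Prop) (p : List (V × V)) : Prop :=
  IsCycle E p ∧ (p.map Prod.fst).Nodup

/-- The total weight of a path/cycle: the sum of the weights of its edges. -/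
def cycWeight {V : Type*} (w : V → V → ℤ) (p : List (V × V)) : ℤ :=
  (p.map fun e => w e.1 e.2).sum

/-- Unlike `IsEdgePath`, this admits the empty walk from a vertex to itself. -/
inductive IsWalk {V : Type*} (E : V → V → Prop) : V → V → List (V × V) → Prop
  | nil (a : V) : IsWalk E a a []
  | cons {a b c : V} {p : List (V × V)} : E a b → IsWalk E b c p → IsWalk E a c ((a, b) :: p)

namespace IsWalk

variable {V : Type*} {E : V → V → Prop} {a b c : V} {p q : List (V × V)}

theorem append (hp : IsWalk E a b p) (hq : IsWalk E b c q) : IsWalk E a c (p ++ q) := by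
  induction hp with
  | nil => exact hq
  | cons hab _ ih => exact cons hab (ih hq)

theorem flatten_replicate (hp : IsWalk E a a p) (n : ℕ) :
    IsWalk E a a (List.replicate n p).flatten := by
  induction n with
  | zero => exact nil a
  | succ n ih => rw [List.replicate_succ, List.flatten_cons]; exact hp.append ih

theorem head?_map_fst (hp : IsWalk E a b p) (hne : p ≠ []) : p.head?.map Prod.fst = some a := by
  cases hp with
  | nil => contradiction
  | cons => rfl

theorem getLast?_map_snd (hp : IsWalk E a b p) (hne : p ≠ []) :
    p.getLast?.map Prod.snd = some b := by
  induction hp with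
  | nil => contradiction
  | @cons _ _ _ q _ hq ih =>
    cases q with
    | nil => cases hq; rfl
    | cons e q => rw [List.getLast?_cons_cons]; exact ih (List.cons_ne_nil e q)

theorem isEdgePath (hp : IsWalk E a b p) : IsEdgePath E p := by
  induction hp with
  | nil => exact ⟨by simp, List.isChain_nil⟩
  | @cons _ _ _ q hab hq ih =>
    refine ⟨List.forall_mem_cons.mpr ⟨hab, ih.1⟩, ?_⟩
    cases q with
    | nil => exact List.isChain_singleton _
    | cons e q =>
      have he : e.1 = _ := Option.some_inj.mp (hq.head?_map_fst (List.cons_ne_nil e q))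
      exact List.IsChain.cons_cons he.symm ih.2

end IsWalk

theorem IsEdgePath.isWalk {V : Type*} {E : V → V → Prop} {a b : V} {p : List (V × V)}
    (hp : IsEdgePath E p) (ha : p.head?.map Prod.fst = some a)
    (hb : p.getLast?.map Prod.snd = some b) : IsWalk E a b p := by
  induction p generalizing a with
  | nil => simp at ha
  | cons e q ih =>
    obtain ⟨x, y⟩ := e
    obtain rfl : x = a := by simpa using ha
    obtain ⟨hE, hchain⟩ := hp
    refine IsWalk.cons (hE _ List.mem_cons_self) ?_
    cases q with
    | nil =>
      obtain rfl : y = b := by simpa using hb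
      exact IsWalk.nil y
    | cons f q =>
      obtain ⟨hyf, hq⟩ := List.isChain_cons_cons.mp hchain
      refine ih ⟨fun e he => hE e (List.mem_cons_of_mem _ he), hq⟩ (by simpa using hyf.symm) ?_
      rwa [List.getLast?_cons_cons] at hb

theorem isCycle_iff_exists_isWalk {V : Type*} {E : V → V → Prop} {p : List (V × V)} :
    IsCycle E p ↔ p ≠ [] ∧ ∃ a, IsWalk E a a p := by
  constructor
  · rintro ⟨hp, hne, hends⟩
    obtain ⟨a, ha⟩ : ∃ a, p.head?.map Prod.fst = some a :=
      Option.ne_none_iff_exists'.mp (by simpa using hne)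
    exact ⟨hne, a, hp.isWalk ha (hends ▸ ha)⟩
  · rintro ⟨hne, a, hp⟩
    exact ⟨hp.isEdgePath, hne, by rw [hp.head?_map_fst hne, hp.getLast?_map_snd hne]⟩

theorem exists_isWalk_of_reflTransGen {V : Type*} {E : V → V → Prop} {a b : V}
    (h : Relation.ReflTransGen E a b) : ∃ p, IsWalk E a b p := by
  induction h using Relation.ReflTransGen.head_induction_on with
  | refl => exact ⟨[], IsWalk.nil b⟩
  | head hac _ ih =>
    obtain ⟨p, hp⟩ := ih
    exact ⟨_, IsWalk.cons hac hp⟩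

theorem cycWeight_append {V : Type*} (w : V → V → ℤ) (p q : List (V × V)) :
    cycWeight w (p ++ q) = cycWeight w p + cycWeight w q := by
  simp [cycWeight]

theorem cycWeight_flatten_replicate {V : Type*} (w : V → V → ℤ) (p : List (V × V)) (n : ℕ) :
    cycWeight w (List.replicate n p).flatten = n * cycWeight w p := by
  simp [cycWeight, List.map_flatten, List.sum_flatten, List.map_replicate, List.sum_replicate]

/-- Going `-weight v` times around `u` and `weight u` times around `v` cancels the weights. -/
theorem exists_zero_cycle_of_closed_walks {V : Type*} {E : V → V → Prop} (w : V → V → ℤ) {a : V}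
    {u v : List (V × V)} (hu : IsWalk E a a u) (hv : IsWalk E a a v) (hv_ne : v ≠ [])
    (hu_pos : 0 < cycWeight w u) (hv_nonpos : cycWeight w v ≤ 0) :
    ∃ c, IsCycle E c ∧ cycWeight w c = 0 := by
  obtain ⟨m, hm⟩ : ∃ m : ℕ, (m : ℤ) = -cycWeight w v := ⟨_, Int.toNat_of_nonneg (by omega)⟩
  obtain ⟨k, hk⟩ : ∃ k : ℕ, (k : ℤ) = cycWeight w u := ⟨_, Int.toNat_of_nonneg hu_pos.le⟩
  have hk0 : k ≠ 0 := by omega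
  refine ⟨(List.replicate m u).flatten ++ (List.replicate k v).flatten,
    isCycle_iff_exists_isWalk.mpr
      ⟨?_, a, (hu.flatten_replicate m).append (hv.flatten_replicate k)⟩, ?_⟩
  · simp [List.flatten_eq_nil_iff, hk0, hv_ne]
  · rw [cycWeight_append, cycWeight_flatten_replicate, cycWeight_flatten_replicate, hm, hk]
    ring

theorem zero_cycle_of_pos_and_neg_cycles_general {V : Type*}
    (E : V → V → Prop) (w : V → V → ℤ)
    (hconn : ∀ u v : V, Relation.ReflTransGen E u v)
    (c1 c2 : List (V × V))
    (h1 : IsCycle E c1) (h1pos : 0 < cycWeight w c1)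
    (h2 : IsCycle E c2) (h2neg : cycWeight w c2 < 0) :
    ∃ c, IsCycle E c ∧ cycWeight w c = 0 := by
  obtain ⟨-, a, hc1⟩ := isCycle_iff_exists_isWalk.mp h1
  obtain ⟨hc2_ne, b, hc2⟩ := isCycle_iff_exists_isWalk.mp h2
  obtain ⟨p, hp⟩ := exists_isWalk_of_reflTransGen (hconn a b)
  obtain ⟨q, hq⟩ := exists_isWalk_of_reflTransGen (hconn b a)
  -- Detour through the other cycle, so that both loops are nonempty even when `a = b`.
  have hloop_a : IsWalk E a a (p ++ (c2 ++ q)) := hp.append (hc2.append hq)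
  have hloop_b : IsWalk E b b (q ++ (c1 ++ p)) := hq.append (hc1.append hp)
  rcases le_or_gt (cycWeight w (p ++ (c2 ++ q))) 0 with hle | hgt
  · exact exists_zero_cycle_of_closed_walks w hc1 hloop_a (by simp [hc2_ne]) h1pos hle
  · have hpos : 0 < cycWeight w (q ++ (c1 ++ p)) := by
      simp only [cycWeight_append] at hgt ⊢
      omega
    exact exists_zero_cycle_of_closed_walks w hloop_b hc2 hc2_ne hpos h2neg.le

/-- A finite strongly connected weighted graph containing a strictly positive
cycle and a strictly negative cycle contains a cycle of weight exactly 0. -/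
theorem zero_cycle_of_pos_and_neg_cycles {V : Type*} [Fintype V]
    (E : V → V → Prop) (w : V → V → ℤ)
    (hconn : ∀ u v : V, Relation.ReflTransGen E u v)
    (c1 c2 : List (V × V))
    (h1 : IsCycle E c1) (h1pos : 0 < cycWeight w c1)
    (h2 : IsCycle E c2) (h2neg : cycWeight w c2 < 0) :
    ∃ c, IsCycle E c ∧ cycWeight w c = 0 :=
  zero_cycle_of_pos_and_neg_cycles_general E w hconn c1 c2 h1 h1pos h2 h2neg
end
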